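/- Let θ be an irrational real number, let 0 < a < b < 1, and let ε > 0. Then there exists a natural number n₀ = n(θ, ε, a, b) such that for any reals α, β > 0 satisfying {β} < {α} and b − a + ε < {α} − {β} < 1 − ε, there exists a natural number k ≤ n₀ with {β + kθ} < a and {α + kθ} > b. -/

import Mathlib

/-!
Write `d = {α} - {β}`. If `{β + kθ}` lies in `(max 0 (b - d), min a (1 - d))`, then adding `d`
does not wrap around, so `{α + kθ} = {β + kθ} + d > b`. This interval has length at least
`δ = min a (min ε (1 - b))`, independently of `α, β`. By Dirichlet's approximation theorem some
`kθ` has fractional part `s ∈ (0, δ / 2)` (if `{kθ}` is close to `1` instead, a multiple of `kθ`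
has small positive fractional part); the orbit of any point under steps of `kθ` moves by `s`
modulo `1`, so it hits every interval of length `δ` within `⌈s⁻¹⌉` steps.
-/

open Int Set

section FloorField

variable {K : Type*} [Field K] [LinearOrder K] [IsStrictOrderedRing K] [FloorRing K]

lemma fract_add_nat_mul_fract (x t : K) (n : ℕ) :
    fract (x + n * fract t) = fract (x + n * t) :=
  fract_eq_fract.2 ⟨-(n * ⌊t⌋), by push_cast; rw [fract]; ring⟩

lemma exists_nat_le_ceil_fract_add_mul_mem_Ico {s : K} (hs : 0 < s) (x : K) {c : K}
    (hc : 0 ≤ c) (hcs : c + s ≤ 1) :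
    ∃ j : ℕ, j ≤ ⌈s⁻¹⌉₊ ∧ fract (x + j * s) ∈ Ico c (c + s) := by
  set u := fract (c - x)
  have hu : u / s < s⁻¹ := by
    rw [div_eq_mul_inv]
    exact mul_lt_of_lt_one_left (inv_pos.2 hs) (fract_lt_one _)
  set j := ⌈u / s⌉₊
  have hju : u ≤ j * s := (div_le_iff₀ hs).1 (Nat.le_ceil _)
  have hjs : j * s < u + s := by
    have := Nat.ceil_lt_add_one (div_nonneg (fract_nonneg (c - x)) hs.le)
    rwa [← lt_div_iff₀ hs, add_div, div_self hs.ne']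
  refine ⟨j, Nat.ceil_mono hu.le, ?_⟩
  have hfract : fract (x + j * s) = c + (j * s - u) :=
    fract_eq_iff.2 ⟨by linarith, by linarith, -⌊c - x⌋, by
      push_cast; linear_combination floor_add_fract (c - x)⟩
  rw [hfract]
  exact ⟨by linarith, by linarith⟩

lemma exists_nat_fract_mul_mem_Ioo_of_one_sub_fract_lt {t η : K} (ht : fract t ≠ 0)
    (h : 1 - fract t < η) : ∃ j : ℕ, fract (j * t) ∈ Ioo 0 η := by
  set y := 1 - fract t
  have hy0 : 0 < y := sub_pos.2 (fract_lt_one t)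
  obtain ⟨j, hjy, hjy'⟩ : ∃ j : ℕ, (j : K) * y < 1 ∧ 1 ≤ (j + 1) * y := by
    have hn := Nat.ceil_pos.2 (inv_pos.2 hy0)
    refine ⟨⌈y⁻¹⌉₊ - 1, ?_, ?_⟩
    · rw [Nat.cast_sub hn, Nat.cast_one, sub_mul, one_mul, sub_lt_iff_lt_add,
        ← lt_div_iff₀ hy0, add_div, div_self hy0.ne', one_div]
      exact Nat.ceil_lt_add_one (inv_pos.2 hy0).le
    · rw [Nat.cast_sub hn, Nat.cast_one, sub_add_cancel, ← div_le_iff₀ hy0, one_div]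
      exact Nat.le_ceil _
  have hjpos : 0 < (j : K) * y := by
    have := (fract_nonneg t).lt_of_ne' ht
    nlinarith
  have hfract : fract (j * t) = 1 - j * y :=
    fract_eq_iff.2 ⟨by linarith, by linarith, j * ⌊t⌋ + j - 1, by
      push_cast; linear_combination -(j : K) * floor_add_fract t⟩
  exact ⟨j, by rw [hfract]; linarith, by rw [hfract]; linarith⟩

lemma fract_add_eq_fract_add_add_fract_sub_fract {x y z : K}
    (h : fract (x + z) + (fract y - fract x) ∈ Ico 0 1) :
    fract (y + z) = fract (x + z) + (fract y - fract x) :=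
  fract_eq_iff.2 ⟨h.1, h.2, ⌊y⌋ + ⌊x + z⌋ - ⌊x⌋, by
    push_cast; linear_combination -floor_add_fract y - floor_add_fract (x + z) + floor_add_fract x⟩

end FloorField

namespace Irrational

variable {θ η : ℝ}

lemma exists_nat_fract_mul_mem_Ioo (hθ : Irrational θ) (hη : 0 < η) :
    ∃ k : ℕ, fract (k * θ) ∈ Ioo 0 η := by
  obtain ⟨n, hn⟩ := exists_nat_gt η⁻¹
  have hn0 : 0 < n := by exact_mod_cast (inv_pos.2 hη).trans hn
  obtain ⟨k, hk, -, hdist⟩ := Real.exists_nat_abs_mul_sub_round_le θ hn0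
  have hmin : min (fract (k * θ)) (1 - fract (k * θ)) < η := by
    rw [← abs_sub_round_eq_min]
    refine hdist.trans_lt ?_
    rw [div_lt_iff₀ (by positivity), ← div_lt_iff₀' hη, one_div]
    linarith
  have hne : fract (k * θ) ≠ 0 := fract_ne_zero_iff.2 <| by
    rintro ⟨z, hz⟩
    exact (hθ.natCast_mul hk.ne').ne_int z hz.symm
  rcases min_lt_iff.1 hmin with h | h
  · exact ⟨k, (fract_nonneg _).lt_of_ne' hne, h⟩
  · obtain ⟨j, hj⟩ := exists_nat_fract_mul_mem_Ioo_of_one_sub_fract_lt hne h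
    exact ⟨j * k, by rwa [Nat.cast_mul, mul_assoc]⟩

lemma exists_bound_fract_add_nat_mul_mem_Ioo (hθ : Irrational θ) (hη : 0 < η) :
    ∃ N : ℕ, ∀ x c : ℝ, 0 ≤ c → c + η ≤ 1 → ∃ k ≤ N, fract (x + k * θ) ∈ Ioo c (c + η) := by
  obtain ⟨k, hs0, hs⟩ := hθ.exists_nat_fract_mul_mem_Ioo (half_pos hη)
  refine ⟨⌈(fract (k * θ))⁻¹⌉₊ * k, fun x c hc hcη => ?_⟩
  obtain ⟨j, hj, hmem⟩ :=
    exists_nat_le_ceil_fract_add_mul_mem_Ico hs0 x (c := c + fract (k * θ)) (by linarith)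
      (by linarith)
  refine ⟨j * k, Nat.mul_le_mul_right k hj, ?_⟩
  rw [Nat.cast_mul, mul_assoc, ← fract_add_nat_mul_fract]
  exact ⟨by linarith [hmem.1], by linarith [hmem.2]⟩

end Irrational

theorem stmt6_general (θ : ℝ) (hθ : Irrational θ) (a b ε : ℝ)
    (ha : 0 < a) (hb : b < 1) (hε : 0 < ε) :
    ∃ n₀ : ℕ, ∀ α β : ℝ, 0 < α → 0 < β → Int.fract β < Int.fract α →
      b - a + ε < Int.fract α - Int.fract β → Int.fract α - Int.fract β < 1 - ε →
      ∃ k : ℕ, k ≤ n₀ ∧ Int.fract (β + (k : ℝ) * θ) < a ∧ b < Int.fract (α + (k : ℝ) * θ) := by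
  set δ := min a (min ε (1 - b))
  have hδ : 0 < δ := lt_min ha (lt_min hε (sub_pos.2 hb))
  have hδa : δ ≤ a := min_le_left _ _
  have hδε : δ ≤ ε := (min_le_right _ _).trans (min_le_left _ _)
  have hδb : δ ≤ 1 - b := (min_le_right _ _).trans (min_le_right _ _)
  obtain ⟨N, hN⟩ := hθ.exists_bound_fract_add_nat_mul_mem_Ioo hδ
  refine ⟨N, fun α β _ _ hβα hlo hhi => ?_⟩
  set d := fract α - fract β
  have hca : max 0 (b - d) + δ ≤ a := by
    rw [← max_add_add_right]; exact max_le (by linarith) (by linarith)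
  have hcd : max 0 (b - d) + δ ≤ 1 - d := by
    rw [← max_add_add_right]; exact max_le (by linarith) (by linarith)
  obtain ⟨k, hkN, hk⟩ := hN β (max 0 (b - d)) (le_max_left _ _) (by linarith)
  have hα : fract (α + k * θ) = fract (β + k * θ) + d :=
    fract_add_eq_fract_add_add_fract_sub_fract
      ⟨by linarith [fract_nonneg (β + k * θ)], by linarith [hk.2]⟩
  refine ⟨k, hkN, by linarith [hk.2], ?_⟩
  rw [hα]
  linarith [hk.1, le_max_right 0 (b - d)]

/-- Let `θ` be irrational, `0 < a < b < 1`, `ε > 0`. Then there exists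
`n₀ = n(θ, ε, a, b)` such that for any reals `α, β > 0` with `{β} < {α}` and
`b - a + ε < {α} - {β} < 1 - ε`, there exists `k ≤ n₀` with `{β + kθ} < a` and
`{α + kθ} > b`. -/
theorem stmt6 (θ : ℝ) (hθ : Irrational θ) (a b ε : ℝ)
    (ha : 0 < a) (hab : a < b) (hb : b < 1) (hε : 0 < ε) :
    ∃ n₀ : ℕ, ∀ α β : ℝ, 0 < α → 0 < β → Int.fract β < Int.fract α →
      b - a + ε < Int.fract α - Int.fract β → Int.fract α - Int.fract β < 1 - ε →
      ∃ k : ℕ, k ≤ n₀ ∧ Int.fract (β + (k : ℝ) * θ) < a ∧ b < Int.fract (α + (k : ℝ) * θ) :=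
  stmt6_general θ hθ a b ε ha hb hε
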